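/- Let t be a nonempty finite binary word and k ≥ 1 an integer, and let w be the infinite binary word w = t · μ^k(t) · μ^{2k}(t) · μ^{3k}(t) ⋯ (the concatenation of the words μ^{jk}(t) for j = 0, 1, 2, …). Then the 2-kernel of w, i.e. the set of sequences { n ↦ w(2^e·n + i) : e ≥ 0, 0 ≤ i < 2^e }, is finite; equivalently, w is 2-automatic. -/

import Mathlib

/-- An overlap: a word of the form a x a x a, with `a` a single letter. -/
def Overlap (w : List (Fin 2)) : Prop :=
  ∃ (a : Fin 2) (x : List (Fin 2)), w = [a] ++ x ++ [a] ++ x ++ [a]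

/-- `w` occurs as a (contiguous) factor of the infinite word `x`. -/
def FactorOf (w : List (Fin 2)) (x : ℕ → Fin 2) : Prop :=
  ∃ i, w = (List.range w.length).map (fun j => x (i + j))

/-- An infinite binary word is overlap-free if no finite factor is an overlap. -/
def OverlapFree (x : ℕ → Fin 2) : Prop :=
  ∀ w, FactorOf w x → ¬ Overlap w

/-- The Thue–Morse morphism applied to an infinite word. -/
def mu (x : ℕ → Fin 2) : ℕ → Fin 2 :=
  fun n => if n % 2 = 0 then x (n / 2) else 1 - x (n / 2)

/-- Prepend a finite word to an infinite word. -/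
def prepend (p : List (Fin 2)) (w : ℕ → Fin 2) : ℕ → Fin 2 :=
  fun n => if h : n < p.length then p.get ⟨n, h⟩ else w (n - p.length)

/-- `x` begins with the finite word `p`. -/
def BeginsWith (x : ℕ → Fin 2) (p : List (Fin 2)) : Prop :=
  ∀ i < p.length, x i = p.getD i 0

/-- The Thue--Morse morphism on finite words. -/
def muWord (w : List (Fin 2)) : List (Fin 2) :=
  w.flatMap (fun a => [a, 1 - a])

/-- The 2-kernel of an infinite word. -/
def Kernel2 (x : ℕ → Fin 2) : Set (ℕ → Fin 2) :=
  {y | ∃ e i : ℕ, i < 2 ^ e ∧ y = fun n => x (2 ^ e * n + i)}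

/-- The finite word `t ++ μ^k(t) ++ μ^{2k}(t) ++ ⋯ ++ μ^{jk}(t)`. -/
def partialConcat (t : List (Fin 2)) (k : ℕ) : ℕ → List (Fin 2)
  | 0 => t
  | j + 1 => partialConcat t k j ++ muWord^[(j + 1) * k] t

/-- The infinite word `t · μ^k(t) · μ^{2k}(t) · μ^{3k}(t) ⋯` (for `t` nonempty,
position `n` lies within the prefix `partialConcat t k n`). -/
def concatWord (t : List (Fin 2)) (k : ℕ) : ℕ → Fin 2 :=
  fun n => (partialConcat t k n).getD n 0

/-!
The word `w = concatWord t k` is the fixed point of `w = t · μᵏ(w)`, and position `2ᵏ c + d` of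
`μᵏ(x)` is `x (c + d / 2ᵏ)` plus a bit that depends on `d` alone. Hence for `e ≥ k` the kernel
sequence `n ↦ w (2ᵉ n + j)` is, up to adding a constant bit, `n ↦ w (2ᵉ⁻ᵏ n + (j - |t|) / 2ᵏ)`.
Offsets in the window `2ᵉ - |t| - 2ᵏ ≤ j < 2ᵉ⁺¹` stay in the window, and for large `e` they are
at least `|t|`, so the reduction can be repeated until `e` is bounded. A kernel sequence with
offset `i < 2ᵉ` is, after its first term, the sequence with offset `2ᵉ + i`, which lies in the
window; so the kernel is covered by finitely many sequences.
-/

open Function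

lemma mu_two_mul_add (x : ℕ → Fin 2) (c a : ℕ) :
    mu x (2 * c + a) = x (c + a / 2) + mu 0 a := by
  have hdiv : (2 * c + a) / 2 = c + a / 2 := by omega
  have hmod : (2 * c + a) % 2 = a % 2 := by omega
  have one_sub : ∀ y : Fin 2, 1 - y = y + 1 := by decide
  unfold mu
  rw [hdiv, hmod]
  rcases Nat.mod_two_eq_zero_or_one a with h | h <;> simp [h, one_sub]

lemma mu_iterate_apply (x : ℕ → Fin 2) (k c d : ℕ) :
    mu^[k] x (2 ^ k * c + d) = x (c + d / 2 ^ k) + mu^[k] 0 d := by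
  induction k generalizing x c with
  | zero => simp
  | succ k ih =>
    have hzero : mu^[k + 1] 0 d = mu 0 (d / 2 ^ k) + mu^[k] 0 d := by
      simpa [iterate_succ_apply] using ih (mu 0) 0
    rw [iterate_succ_apply, pow_succ, mul_assoc, ih, mu_two_mul_add, Nat.div_div_eq_div_mul,
      hzero, add_assoc]

lemma muWord_cons (a : Fin 2) (q : List (Fin 2)) : muWord (a :: q) = a :: (1 - a) :: muWord q :=
  rfl

lemma muWord_append (q r : List (Fin 2)) : muWord (q ++ r) = muWord q ++ muWord r :=
  List.flatMap_append

lemma muWord_iterate_append (k : ℕ) (q r : List (Fin 2)) :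
    muWord^[k] (q ++ r) = muWord^[k] q ++ muWord^[k] r := by
  induction k generalizing q r with
  | zero => rfl
  | succ k ih => simp only [iterate_succ_apply, muWord_append, ih]

lemma length_muWord (q : List (Fin 2)) : (muWord q).length = 2 * q.length := by
  induction q with
  | nil => rfl
  | cons a q ih => simp only [muWord_cons, List.length_cons, ih]; ring

lemma length_muWord_iterate (k : ℕ) (q : List (Fin 2)) :
    (muWord^[k] q).length = 2 ^ k * q.length := by
  induction k generalizing q with
  | zero => simp
  | succ k ih => rw [iterate_succ_apply, ih, length_muWord, pow_succ, mul_assoc]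

lemma getD_muWord (q : List (Fin 2)) {i : ℕ} (hi : i < 2 * q.length) :
    (muWord q).getD i 0 = mu (fun j => q.getD j 0) i := by
  induction q generalizing i with
  | nil => simp at hi
  | cons a q ih =>
    match i, hi with
    | 0, _ => simp [muWord_cons, mu]
    | 1, _ => simp [muWord_cons, mu]
    | i + 2, hi =>
      have hi' : i < 2 * q.length := by simp at hi; omega
      have hdiv : (i + 2) / 2 = i / 2 + 1 := by omega
      have hmod : (i + 2) % 2 = i % 2 := by omega
      rw [muWord_cons, List.getD_cons_succ, List.getD_cons_succ, ih hi']
      simp only [mu, hdiv, hmod, List.getD_cons_succ]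

lemma beginsWith_mu {x : ℕ → Fin 2} {q : List (Fin 2)} (h : BeginsWith x q) :
    BeginsWith (mu x) (muWord q) := by
  intro i hi
  rw [length_muWord] at hi
  rw [getD_muWord q hi]
  simp only [mu, h (i / 2) (by omega)]

lemma beginsWith_mu_iterate {x : ℕ → Fin 2} {q : List (Fin 2)} (h : BeginsWith x q) (k : ℕ) :
    BeginsWith (mu^[k] x) (muWord^[k] q) := by
  induction k with
  | zero => exact h
  | succ k ih => rw [iterate_succ_apply', iterate_succ_apply']; exact beginsWith_mu ih

lemma prepend_of_length_le (p : List (Fin 2)) (x : ℕ → Fin 2) {n : ℕ} (h : p.length ≤ n) :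
    prepend p x n = x (n - p.length) := by
  simp [prepend, Nat.not_lt.2 h]

lemma beginsWith_prepend {x : ℕ → Fin 2} {q : List (Fin 2)} (h : BeginsWith x q)
    (p : List (Fin 2)) : BeginsWith (prepend p x) (p ++ q) := by
  intro i hi
  by_cases hip : i < p.length
  · rw [List.getD_append _ _ _ _ hip]
    simp [prepend, hip]
  · push Not at hip
    rw [prepend_of_length_le p x hip, List.getD_append_right _ _ _ _ hip]
    exact h _ (by simp at hi; omega)

lemma eq_of_forall_beginsWith {x y : ℕ → Fin 2}
    (h : ∀ n, ∃ q : List (Fin 2), n < q.length ∧ BeginsWith x q ∧ BeginsWith y q) : x = y := by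
  funext n
  obtain ⟨q, hn, hx, hy⟩ := h n
  rw [hx n hn, hy n hn]

lemma List.IsPrefix.getD_eq {α : Type*} {l₁ l₂ : List α} (h : l₁ <+: l₂) {i : ℕ}
    (hi : i < l₁.length) (d : α) : l₁.getD i d = l₂.getD i d := by
  rw [List.getD_eq_getElem _ _ hi, List.getD_eq_getElem _ _ (hi.trans_le h.length_le),
    h.getElem hi]

section Concat

variable (t : List (Fin 2)) (k : ℕ)

lemma partialConcat_succ' (j : ℕ) :
    partialConcat t k (j + 1) = t ++ muWord^[k] (partialConcat t k j) := by
  induction j with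
  | zero => simp [partialConcat]
  | succ j ih =>
    conv_rhs => rw [partialConcat.eq_2]
    rw [partialConcat.eq_2, ih, muWord_iterate_append, List.append_assoc,
      ← iterate_add_apply muWord k, show k + (j + 1) * k = (j + 1 + 1) * k by ring]

lemma partialConcat_prefix_of_le {i j : ℕ} (hij : i ≤ j) :
    partialConcat t k i <+: partialConcat t k j := by
  induction j, hij using Nat.le_induction with
  | base => exact List.prefix_rfl
  | succ j _ ih => exact ih.trans (List.prefix_append _ _)

variable {t}

lemma lt_length_partialConcat (ht : t ≠ []) (j : ℕ) : j < (partialConcat t k j).length := by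
  induction j with
  | zero => exact List.length_pos_iff.2 ht
  | succ j ih =>
    rw [partialConcat_succ', List.length_append, length_muWord_iterate]
    have ht_pos := List.length_pos_iff.2 ht
    have hj : j < 2 ^ k * (partialConcat t k j).length :=
      ih.trans_le (Nat.le_mul_of_pos_left _ (Nat.two_pow_pos k))
    omega

lemma beginsWith_partialConcat (ht : t ≠ []) (j : ℕ) :
    BeginsWith (concatWord t k) (partialConcat t k j) := by
  intro i hi
  rw [concatWord, (partialConcat_prefix_of_le t k (le_max_left i j)).getD_eq
      (lt_length_partialConcat k ht i),
    (partialConcat_prefix_of_le t k (le_max_right i j)).getD_eq hi]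

theorem concatWord_eq_prepend (ht : t ≠ []) :
    concatWord t k = prepend t (mu^[k] (concatWord t k)) := by
  refine eq_of_forall_beginsWith fun n => ⟨partialConcat t k (n + 1),
    (lt_length_partialConcat k ht (n + 1)).trans' n.lt_succ_self,
    beginsWith_partialConcat k ht _, ?_⟩
  rw [partialConcat_succ']
  exact beginsWith_prepend (beginsWith_mu_iterate (beginsWith_partialConcat k ht n) k) t

end Concat

section Kernel

variable {x : ℕ → Fin 2} {p : List (Fin 2)} {k : ℕ}

lemma apply_two_pow_mul_add_of_eq_prepend (hx : x = prepend p (mu^[k] x)) {e j : ℕ}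
    (hke : k ≤ e) (hj : p.length ≤ j) (n : ℕ) :
    x (2 ^ e * n + j) =
      x (2 ^ (e - k) * n + (j - p.length) / 2 ^ k) + mu^[k] 0 (j - p.length) := by
  have hsplit : 2 ^ e * n + j - p.length = 2 ^ k * (2 ^ (e - k) * n) + (j - p.length) := by
    rw [← mul_assoc, ← pow_add, Nat.add_sub_cancel' hke]
    omega
  conv_lhs => rw [hx]
  rw [prepend_of_length_le p _ (by omega), hsplit, mu_iterate_apply]

lemma exists_two_pow_mul_add_of_eq_prepend (hk : 1 ≤ k) (hx : x = prepend p (mu^[k] x))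
    {E : ℕ} (hkE : k ≤ E) (hE : 2 * p.length + 2 ^ k ≤ 2 ^ E) (e j : ℕ)
    (hj_ge : 2 ^ e ≤ j + (p.length + 2 ^ k)) (hj_lt : j < 2 ^ (e + 1)) :
    ∃ e' < E, ∃ j' < 2 ^ (e' + 1), ∃ c : Fin 2,
      ∀ n, x (2 ^ e * n + j) = c + x (2 ^ e' * n + j') := by
  induction e using Nat.strong_induction_on generalizing j with
  | _ e ih =>
  by_cases heE : e < E
  · exact ⟨e, heE, j, hj_lt, 0, fun n => (zero_add _).symm⟩
  set m := p.length
  set P := 2 ^ k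
  have hke : k ≤ e := by omega
  have hP : 2 ≤ P := Nat.le_self_pow (by omega) 2
  have hpow : 2 ^ e = P * 2 ^ (e - k) := by rw [← pow_add, Nat.add_sub_cancel' hke]
  have hEe : 2 ^ E ≤ 2 ^ e := Nat.pow_le_pow_right two_pos (by omega)
  have hmj : m ≤ j := by omega
  set j' := (j - m) / P
  have hj'_lt : j' < 2 ^ (e - k + 1) := by
    rw [Nat.div_lt_iff_lt_mul (by omega), pow_succ]
    rw [pow_succ, hpow] at hj_lt
    linarith [Nat.sub_le j m]
  have hj'_ge : 2 ^ (e - k) ≤ j' + (m + P) := by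
    refine Nat.le_of_mul_le_mul_left ?_ (by omega : 0 < P)
    have hdiv : j - m < j' * P + P := Nat.lt_div_mul_add (by omega)
    have hsub : j - m + m = j := Nat.sub_add_cancel hmj
    rw [hpow] at hj_ge
    linarith [Nat.mul_le_mul_right m hP, Nat.mul_le_mul_right P hP]
  obtain ⟨e', he', j'', hj'', c, hc⟩ := ih (e - k) (by omega) j' hj'_ge hj'_lt
  refine ⟨e', he', j'', hj'', c + mu^[k] 0 (j - m), fun n => ?_⟩
  rw [apply_two_pow_mul_add_of_eq_prepend hx hke hmj, hc, add_right_comm]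

theorem kernel2_finite_of_eq_prepend (hk : 1 ≤ k) (hx : x = prepend p (mu^[k] x)) :
    (Kernel2 x).Finite := by
  obtain ⟨E, hkE, hE⟩ : ∃ E, k ≤ E ∧ 2 * p.length + 2 ^ k ≤ 2 ^ E :=
    ⟨2 * p.length + 2 ^ k, by have := k.lt_two_pow_self; omega, Nat.lt_two_pow_self.le⟩
  let F : ℕ × ℕ × Fin 2 × Fin 2 → ℕ → Fin 2 := fun ⟨e, j, c, a⟩ n =>
    if n = 0 then a else c + x (2 ^ e * (n - 1) + j)
  refine (((Set.finite_Iio E).prod ((Set.finite_Iio (2 ^ E)).prod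
    (Set.finite_univ.prod Set.finite_univ))).image F).subset ?_
  rintro y ⟨e, i, hi, rfl⟩
  obtain ⟨e', he', j', hj', c, hc⟩ := exists_two_pow_mul_add_of_eq_prepend hk hx hkE hE
    e (2 ^ e + i) (Nat.le_add_right_of_le (Nat.le_add_right _ _)) (by rw [pow_succ]; omega)
  refine ⟨(e', j', c, x i),
    ⟨he', hj'.trans_le (Nat.pow_le_pow_right two_pos he'), trivial, trivial⟩, ?_⟩
  funext n
  rcases n with _ | n
  · simp [F]
  · simp only [F, Nat.add_one_ne_zero, if_false, Nat.add_sub_cancel, ← hc]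
    congr 1
    ring

end Kernel

theorem kernel2_finite_of_concat (t : List (Fin 2)) (ht : t ≠ []) (k : ℕ) (hk : 1 ≤ k) :
    (Kernel2 (concatWord t k)).Finite :=
  kernel2_finite_of_eq_prepend hk (concatWord_eq_prepend k ht)
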